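/- The explicit formulas (4.2)–(4.4) define a representation of the family of Lie algebras: the ℂ[E]-linear endomorphisms 𝒥, A₊, A₋ of the free ℂ[E]-module M = ⨁_{n∈ℤ} ℂ[E]·f_n satisfy the commutation relations [𝒥, A₊] = A₊, [𝒥, A₋] = −A₋, and [A₊, A₋] = E·𝒥, where E·𝒥 denotes the composition of 𝒥 with scalar multiplication by the polynomial E. -/
import Mathlib


noncomputable section

open Polynomial

/-- The polynomial ring `ℂ[E]`. -/
abbrev RE : Type := Polynomial ℂ

/-- The free `ℂ[E]`-module `M = ⨁_{n∈ℤ} ℂ[E]·f_n` (finitely supported functions `ℤ → ℂ[E]`). -/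
abbrev HCMod : Type := ℤ →₀ RE

/-- The basis element `f_n`. -/
def fn (n : ℤ) : HCMod := Finsupp.single n 1

/-- The degree-one polynomial `k²/2 + E·q²`. -/
def cf (k : ℝ) (q : ℂ) : RE := C ((k : ℂ) ^ 2 / 2) + C (q ^ 2) * X

/-- `𝒥 f_n = n·f_n`. -/
def Jop : HCMod →ₗ[RE] HCMod :=
  Finsupp.lsum RE fun n => LinearMap.toSpanSingleton RE HCMod (((n : ℤ) : RE) • fn n)

/-- `A₊ f_n = f_{n+1}` for `n ≥ 0`, and `A₊ f_n = −(1/2)·(k²/2 + E·(n+1/2)²)·f_{n+1}` for `n < 0`. -/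
def Apop (k : ℝ) : HCMod →ₗ[RE] HCMod :=
  Finsupp.lsum RE fun n => LinearMap.toSpanSingleton RE HCMod
    (if 0 ≤ n then fn (n + 1) else (C (-(1 / 2) : ℂ) * cf k ((n : ℂ) + 1 / 2)) • fn (n + 1))

/-- `A₋ f_n = f_{n−1}` for `n ≤ 0`, and `A₋ f_n = −(1/2)·(k²/2 + E·(n−1/2)²)·f_{n−1}` for `n > 0`. -/
def Amop (k : ℝ) : HCMod →ₗ[RE] HCMod :=
  Finsupp.lsum RE fun n => LinearMap.toSpanSingleton RE HCMod
    (if n ≤ 0 then fn (n - 1) else (C (-(1 / 2) : ℂ) * cf k ((n : ℂ) - 1 / 2)) • fn (n - 1))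

lemma smul_fn (c : RE) (n : ℤ) : c • fn n = Finsupp.single n c := by
  rw [fn, Finsupp.smul_single, smul_eq_mul, mul_one]

lemma Jop_apply (n : ℤ) (b : RE) : Jop (Finsupp.single n b) = Finsupp.single n (b * n) := by
  rw [Jop, Finsupp.lsum_single, LinearMap.toSpanSingleton_apply, smul_smul, smul_fn]

lemma Apop_apply_nonneg (k : ℝ) {n : ℤ} (h : 0 ≤ n) (b : RE) :
    Apop k (Finsupp.single n b) = Finsupp.single (n + 1) b := by
  rw [Apop, Finsupp.lsum_single, LinearMap.toSpanSingleton_apply, if_pos h, smul_fn]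

lemma Apop_apply_neg (k : ℝ) {n : ℤ} (h : n < 0) (b : RE) :
    Apop k (Finsupp.single n b) =
      Finsupp.single (n + 1) (b * (C (-(1 / 2) : ℂ) * cf k ((n : ℂ) + 1 / 2))) := by
  rw [Apop, Finsupp.lsum_single, LinearMap.toSpanSingleton_apply, if_neg (not_le.mpr h),
    smul_smul, smul_fn]

lemma Amop_apply_nonpos (k : ℝ) {n : ℤ} (h : n ≤ 0) (b : RE) :
    Amop k (Finsupp.single n b) = Finsupp.single (n - 1) b := by
  rw [Amop, Finsupp.lsum_single, LinearMap.toSpanSingleton_apply, if_pos h, smul_fn]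

lemma Amop_apply_pos (k : ℝ) {n : ℤ} (h : 0 < n) (b : RE) :
    Amop k (Finsupp.single n b) =
      Finsupp.single (n - 1) (b * (C (-(1 / 2) : ℂ) * cf k ((n : ℂ) - 1 / 2))) := by
  rw [Amop, Finsupp.lsum_single, LinearMap.toSpanSingleton_apply, if_neg (not_le.mpr h),
    smul_smul, smul_fn]


/-- The explicit formulas (4.2)–(4.4) define a representation of the family of Lie
algebras: `[𝒥, A₊] = A₊`, `[𝒥, A₋] = −A₋`, `[A₊, A₋] = E·𝒥`, where `E·𝒥` is the
composition of `𝒥` with scalar multiplication by the polynomial `E`. -/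
theorem stmt_15 (k : ℝ) :
    Jop ∘ₗ Apop k - Apop k ∘ₗ Jop = Apop k ∧
    Jop ∘ₗ Amop k - Amop k ∘ₗ Jop = -Amop k ∧
    Apop k ∘ₗ Amop k - Amop k ∘ₗ Apop k = (X : RE) • Jop := by
  refine ⟨?_, ?_, ?_⟩ <;> apply Finsupp.lhom_ext <;> intro n b <;>
    simp only [LinearMap.sub_apply, LinearMap.comp_apply, LinearMap.neg_apply,
      LinearMap.smul_apply]
  · rcases le_or_gt 0 n with h | h
    · rw [Apop_apply_nonneg k h, Jop_apply, Jop_apply, Apop_apply_nonneg k h,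
        ← Finsupp.single_sub]
      congr 1
      push_cast
      ring
    · rw [Apop_apply_neg k h, Jop_apply, Jop_apply, Apop_apply_neg k h,
        ← Finsupp.single_sub]
      congr 1
      push_cast
      ring
  · rcases le_or_gt n 0 with h | h
    · rw [Amop_apply_nonpos k h, Jop_apply, Jop_apply, Amop_apply_nonpos k h,
        ← Finsupp.single_sub, ← Finsupp.single_neg]
      congr 1
      push_cast
      ring
    · rw [Amop_apply_pos k h, Jop_apply, Jop_apply, Amop_apply_pos k h,
        ← Finsupp.single_sub, ← Finsupp.single_neg]
      congr 1
      push_cast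
      ring
  · rcases lt_trichotomy n 0 with h | h | h
    · rw [Amop_apply_nonpos k h.le, Apop_apply_neg k (by omega : n - 1 < 0),
        Apop_apply_neg k h, Amop_apply_nonpos k (by omega : n + 1 ≤ 0),
        Jop_apply, Finsupp.smul_single, sub_add_cancel, add_sub_cancel_right,
        ← Finsupp.single_sub]
      congr 1
      have h2 : (2:RE) * C ((1:ℂ)/2) = 1 := by
        rw [show (2:RE) = C 2 from (map_ofNat C 2).symm, ← C_mul]; norm_num
      simp only [cf, map_add, map_sub, map_mul, map_pow, map_neg, map_intCast, smul_eq_mul]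
      push_cast
      linear_combination (b * (n:RE) * X + b * C ((1:ℂ)/2) * X) * h2
    · subst h
      rw [Amop_apply_nonpos k le_rfl, Apop_apply_neg k (by norm_num : (0:ℤ) - 1 < 0),
        Apop_apply_nonneg k le_rfl, Amop_apply_pos k (by norm_num : (0:ℤ) < 0 + 1),
        Jop_apply, Finsupp.smul_single, sub_add_cancel, add_sub_cancel_right,
        ← Finsupp.single_sub]
      congr 1
      have h2 : (2:RE) * C ((1:ℂ)/2) = 1 := by
        rw [show (2:RE) = C 2 from (map_ofNat C 2).symm, ← C_mul]; norm_num
      simp only [cf, map_add, map_sub, map_mul, map_pow, map_neg, map_intCast, smul_eq_mul]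
      push_cast
      ring
    · rw [Amop_apply_pos k h, Apop_apply_nonneg k (by omega : (0:ℤ) ≤ n - 1),
        Apop_apply_nonneg k h.le, Amop_apply_pos k (by omega : (0:ℤ) < n + 1),
        Jop_apply, Finsupp.smul_single, sub_add_cancel, add_sub_cancel_right,
        ← Finsupp.single_sub]
      congr 1
      have h2 : (2:RE) * C ((1:ℂ)/2) = 1 := by
        rw [show (2:RE) = C 2 from (map_ofNat C 2).symm, ← C_mul]; norm_num
      simp only [cf, map_add, map_sub, map_mul, map_pow, map_neg, map_intCast, smul_eq_mul]
      push_cast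
      linear_combination (b * (n:RE) * X - b * C ((1:ℂ)/2) * X) * h2
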